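/- Let δ be a finite C-sequence dataset, ξ ≥ 0 a minimum utility threshold, and k a positive integer. If an L-sequence L satisfies LWU_k(L) < ξ (i.e., L is unpromising), then every L-sequence L' with |L'| ≤ k that contains L as an L-subsequence is of low utility, i.e., u_max(L') < ξ. -/

import Mathlib

open scoped Classical

/-- A C-eventset: a finite set of event labels together with a duration. -/
abbrev CEventset (α : Type*) := Finset α × ℕ

/-- A C-sequence: a finite list of C-eventsets. -/
abbrev CSeq (α : Type*) := List (CEventset α)

/-- An L-sequence: a finite list of (nonempty) finite label sets. -/
abbrev LSeq (α : Type*) := List (Finset α)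

/-- Utility of a C-eventset: duration times the sum of external utilities of its labels. -/
noncomputable def ue {α : Type*} (p : α → NNReal) (σ : CEventset α) : NNReal :=
  (σ.2 : NNReal) * ∑ l ∈ σ.1, p l

/-- Utility of a C-sequence: the sum of the utilities of its C-eventsets. -/
noncomputable def us {α : Type*} (p : α → NNReal) (C : CSeq α) : NNReal :=
  (C.map (ue p)).sum

/-- Containment of C-eventsets: label-set inclusion with equal durations. -/
def CContains {α : Type*} (σa σb : CEventset α) : Prop :=
  σa.1 ⊆ σb.1 ∧ σa.2 = σb.2

/-- `C` is a C-subsequence of `C'`: there is a strictly increasing index map under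
which each C-eventset of `C` is contained in the corresponding one of `C'`. -/
def CSub {α : Type*} (C C' : CSeq α) : Prop :=
  ∃ C₂ : CSeq α, C₂.Sublist C' ∧ List.Forall₂ CContains C C₂

/-- A C-sequence matches an L-sequence iff they have equal length and the label set of
each C-eventset equals the corresponding label set of the L-sequence. -/
def Matches {α : Type*} (C : CSeq α) (L : LSeq α) : Prop :=
  C.map Prod.fst = L

/-- `L` is an L-subsequence of `L'`. -/
def LSub {α : Type*} (L L' : LSeq α) : Prop :=
  ∃ L₂ : LSeq α, L₂.Sublist L' ∧ List.Forall₂ (· ⊆ ·) L L₂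

/-- Maximum of the utility set `u_l(L, C)` (max of the empty set is 0). -/
noncomputable def ulMax {α : Type*} (p : α → NNReal) (L : LSeq α) (C : CSeq α) : NNReal :=
  sSup {x | ∃ C', Matches C' L ∧ CSub C' C ∧ us p C' = x}

/-- Maximum utility `u_max(L)` of an L-sequence in a C-sequence dataset. -/
noncomputable def umax {α : Type*} (p : α → NNReal) (δ : Finset (CSeq α)) (L : LSeq α) :
    NNReal :=
  ∑ C ∈ δ, ulMax p L C

/-- Maximum utility of `k` C-eventsets in a C-sequence (max of the empty set is 0). -/
noncomputable def umaxk {α : Type*} (p : α → NNReal) (C : CSeq α) (k : ℕ) : NNReal :=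
  sSup {x | ∃ C', CSub C' C ∧ C'.length ≤ k ∧ us p C' = x}

/-- L-sequence-weighted utilization `LWU_k(L)` over the dataset `δ`. -/
noncomputable def LWU {α : Type*} (p : α → NNReal) (δ : Finset (CSeq α)) (k : ℕ)
    (L : LSeq α) : NNReal :=
  ∑ C ∈ δ, if ∃ C', CSub C' C ∧ Matches C' L then umaxk p C k else 0

/-- Projected utilization `P_k(L) = u_max(L) + LWU_{k - |L|}(L)`. -/
noncomputable def Pk {α : Type*} (p : α → NNReal) (δ : Finset (CSeq α)) (k : ℕ)
    (L : LSeq α) : NNReal :=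
  umax p δ L + LWU p δ (k - L.length) L

/-!
The bound `u_max(L') ≤ LWU_k(L)` holds sequence by sequence. If `C ∈ δ` has a C-subsequence
matching `L'`, then shrinking its label sets along `L ⊆ L'` gives one matching `L`, so `C` counts
in `LWU_k(L)` with weight `u_maxk(C, k)`; and every match of `L'` in `C` is a C-subsequence of
length `|L'| ≤ k`, so its utility is at most `u_maxk(C, k)`. Otherwise `C` adds `0` to `u_max(L')`.
-/

section

variable {α : Type*}

instance CContains.isTrans : IsTrans (CEventset α) CContains :=
  ⟨fun _ _ _ hab hbc => ⟨hab.1.trans hbc.1, hab.2.trans hbc.2⟩⟩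

theorem cSub_iff_sublistForall₂ {C C' : CSeq α} :
    CSub C C' ↔ List.SublistForall₂ CContains C C' := by
  simp only [CSub, List.sublistForall₂_iff, and_comm]

theorem CSub.trans {C₁ C₂ C₃ : CSeq α} (h₁₂ : CSub C₁ C₂) (h₂₃ : CSub C₂ C₃) : CSub C₁ C₃ := by
  rw [cSub_iff_sublistForall₂] at *
  exact _root_.trans h₁₂ h₂₃

theorem lSub_iff_sublistForall₂ {L L' : LSeq α} :
    LSub L L' ↔ List.SublistForall₂ (· ⊆ ·) L L' := by
  simp only [LSub, List.sublistForall₂_iff, and_comm]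

theorem exists_cSub_matches_of_sublistForall₂ {L : LSeq α} {C : CSeq α}
    (h : List.SublistForall₂ (fun c σ => c ⊆ σ.1) L C) : ∃ C₀, CSub C₀ C ∧ Matches C₀ L := by
  simp only [cSub_iff_sublistForall₂, Matches]
  induction h with
  | nil => exact ⟨[], .nil, rfl⟩
  | @cons c σ _ _ hcσ _ ih =>
    obtain ⟨C₀, hsub, hmatch⟩ := ih
    exact ⟨(c, σ.2) :: C₀, .cons ⟨hcσ, rfl⟩ hsub, by simp [hmatch]⟩
  | cons_right _ ih =>
    obtain ⟨C₀, hsub, hmatch⟩ := ih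
    exact ⟨C₀, .cons_right hsub, hmatch⟩

theorem exists_cSub_matches_of_lSub {L L' : LSeq α} {C : CSeq α} (hsub : LSub L L')
    (hmatch : Matches C L') : ∃ C₀, CSub C₀ C ∧ Matches C₀ L := by
  rw [lSub_iff_sublistForall₂, ← hmatch, List.sublistForall₂_map_right_iff] at hsub
  exact exists_cSub_matches_of_sublistForall₂ hsub

variable (p : α → NNReal)

theorem ue_mono {σ σ' : CEventset α} (h : CContains σ σ') : ue p σ ≤ ue p σ' := by
  rw [ue, ue, h.2]
  gcongr
  exact h.1

theorem us_mono_of_forall₂ {C C' : CSeq α} (h : List.Forall₂ CContains C C') :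
    us p C ≤ us p C' := by
  induction h with
  | nil => rfl
  | cons hσ _ ih =>
    simp only [us, List.map_cons, List.sum_cons] at ih ⊢
    exact add_le_add (ue_mono p hσ) ih

theorem us_mono_of_cSub {C C' : CSeq α} (h : CSub C C') : us p C ≤ us p C' := by
  obtain ⟨C₂, hsub, hcont⟩ := h
  exact (us_mono_of_forall₂ p hcont).trans
    (List.Sublist.sum_le_sum (hsub.map (ue p)) fun _ _ => zero_le)

theorem ulMax_le_umaxk {L : LSeq α} {C : CSeq α} {k : ℕ} (hlen : L.length ≤ k) :
    ulMax p L C ≤ umaxk p C k := by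
  have hbdd : BddAbove {x | ∃ C', CSub C' C ∧ C'.length ≤ k ∧ us p C' = x} :=
    ⟨us p C, by rintro _ ⟨C', hsub, -, rfl⟩; exact us_mono_of_cSub p hsub⟩
  refine csSup_le' ?_
  rintro _ ⟨C', hmatch, hsub, rfl⟩
  have hlen' : C'.length = L.length := by rw [← hmatch, List.length_map]
  exact le_csSup hbdd ⟨C', hsub, hlen' ▸ hlen, rfl⟩

theorem exists_matches_cSub_of_ulMax_ne_zero {L : LSeq α} {C : CSeq α}
    (h : ulMax p L C ≠ 0) : ∃ C', Matches C' L ∧ CSub C' C := by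
  by_contra hnone
  have hempty : {x | ∃ C', Matches C' L ∧ CSub C' C ∧ us p C' = x} = ∅ :=
    Set.eq_empty_of_forall_notMem fun _ ⟨C', hmatch, hsub, _⟩ => hnone ⟨C', hmatch, hsub⟩
  exact h (by rw [ulMax, hempty, csSup_empty, bot_eq_zero])

theorem umax_le_LWU (δ : Finset (CSeq α)) {k : ℕ} {L L' : LSeq α} (hsub : LSub L L')
    (hlen : L'.length ≤ k) : umax p δ L' ≤ LWU p δ k L := by
  refine Finset.sum_le_sum fun C _ => ?_
  split_ifs with hcontrib
  · exact ulMax_le_umaxk p hlen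
  · suffices ulMax p L' C = 0 from this.le
    by_contra hne
    refine hcontrib ?_
    obtain ⟨C', hmatch, hC'⟩ := exists_matches_cSub_of_ulMax_ne_zero p hne
    obtain ⟨C₀, hC₀, hmatch₀⟩ := exists_cSub_matches_of_lSub hsub hmatch
    exact ⟨C₀, hC₀.trans hC', hmatch₀⟩

end

theorem unpromising_LWU_low_utility_general {α : Type*} (p : α → NNReal)
    (δ : Finset (CSeq α)) (ξ : NNReal) (k : ℕ)
    (L : LSeq α) (hun : LWU p δ k L < ξ) :
    ∀ L' : LSeq α, (∀ c ∈ L', c.Nonempty) → LSub L L' → L'.length ≤ k →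
      umax p δ L' < ξ :=
  fun _ _ hsub hlen => (umax_le_LWU p δ hsub hlen).trans_lt hun

/-- an unpromising candidate (LWU_k(L) < ξ) has only low-utility
L-supersequences of length at most k. -/
theorem unpromising_LWU_low_utility {α : Type*} (p : α → NNReal)
    (δ : Finset (CSeq α)) (ξ : NNReal) (k : ℕ) (hk : 0 < k)
    (L : LSeq α) (hL : ∀ c ∈ L, c.Nonempty) (hun : LWU p δ k L < ξ) :
    ∀ L' : LSeq α, (∀ c ∈ L', c.Nonempty) → LSub L L' → L'.length ≤ k →
      umax p δ L' < ξ :=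
  unpromising_LWU_low_utility_general p δ ξ k L hun
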